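/- Let T : ℤ¹¹ → ℤ¹¹ be the ℤ-linear map defined on the ordered basis (h, e₁₂₃, e₁₂₄, e₁₃₄, e₂₃₄, f₁₂, f₁₃, f₁₄, f₂₃, f₂₄, f₃₄) of the domain with values in the ordered basis (h̃₁₂, h̃₁₃, h̃₂₃, ẽ₁₃₅, ẽ₂₄₆, f̃₁₃, f̃₁₅, f̃₃₅, f̃₂₄, f̃₂₆, f̃₄₆) of the codomain by: T(h) = h̃₁₂ + h̃₁₃ + h̃₂₃ − ẽ₂₄₆, T(e₁₂₃) = h̃₁₃ + h̃₂₃ − ẽ₂₄₆, T(e₁₂₄) = h̃₁₂ + h̃₂₃ − ẽ₂₄₆, T(e₁₃₄) = h̃₁₂ + h̃₁₃ − ẽ₂₄₆, T(e₂₃₄) = ẽ₁₃₅, T(f₁₂) = h̃₂₃ − ẽ₂₄₆ + f̃₄₆, T(f₁₃) = h̃₁₃ − ẽ₂₄₆ + f̃₂₆, T(f₁₄) = h̃₁₂ − ẽ₂₄₆ + f̃₂₄, T(f₂₃) = f̃₁₃, T(f₂₄) = f̃₁₅, T(f₃₄) = f̃₃₅. Then T is a bijection (a ℤ-module isomorphism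 of ℤ¹¹). -/

import Mathlib

/-- Images of the ordered domain basis
`(h, e₁₂₃, e₁₂₄, e₁₃₄, e₂₃₄, f₁₂, f₁₃, f₁₄, f₂₃, f₂₄, f₃₄)` of `A₁(X_{Π₃}) ≅ ℤ¹¹`
under the pushforward `τ̂⋆`, written as coordinate vectors in the ordered
codomain basis `(h̃₁₂, h̃₁₃, h̃₂₃, ẽ₁₃₅, ẽ₂₄₆, f̃₁₃, f̃₁₅, f̃₃₅, f̃₂₄, f̃₂₆, f̃₄₆)`. -/
def tauImage : Fin 11 → Fin 11 → ℤ :=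
  ![![1, 1, 1, 0, -1, 0, 0, 0, 0, 0, 0],   -- T(h)    = h̃₁₂ + h̃₁₃ + h̃₂₃ − ẽ₂₄₆
    ![0, 1, 1, 0, -1, 0, 0, 0, 0, 0, 0],   -- T(e₁₂₃) = h̃₁₃ + h̃₂₃ − ẽ₂₄₆
    ![1, 0, 1, 0, -1, 0, 0, 0, 0, 0, 0],   -- T(e₁₂₄) = h̃₁₂ + h̃₂₃ − ẽ₂₄₆
    ![1, 1, 0, 0, -1, 0, 0, 0, 0, 0, 0],   -- T(e₁₃₄) = h̃₁₂ + h̃₁₃ − ẽ₂₄₆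
    ![0, 0, 0, 1, 0, 0, 0, 0, 0, 0, 0],    -- T(e₂₃₄) = ẽ₁₃₅
    ![0, 0, 1, 0, -1, 0, 0, 0, 0, 0, 1],   -- T(f₁₂)  = h̃₂₃ − ẽ₂₄₆ + f̃₄₆
    ![0, 1, 0, 0, -1, 0, 0, 0, 0, 1, 0],   -- T(f₁₃)  = h̃₁₃ − ẽ₂₄₆ + f̃₂₆
    ![1, 0, 0, 0, -1, 0, 0, 0, 1, 0, 0],   -- T(f₁₄)  = h̃₁₂ − ẽ₂₄₆ + f̃₂₄
    ![0, 0, 0, 0, 0, 1, 0, 0, 0, 0, 0],    -- T(f₂₃)  = f̃₁₃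
    ![0, 0, 0, 0, 0, 0, 1, 0, 0, 0, 0],    -- T(f₂₄)  = f̃₁₅
    ![0, 0, 0, 0, 0, 0, 0, 1, 0, 0, 0]]    -- T(f₃₄)  = f̃₃₅

/-- The pushforward `τ̂⋆` as the `ℤ`-linear extension of `tauImage`: a coefficient
vector `c` in the domain basis is sent to `∑ j, c j • tauImage j`. -/
def tauStar : (Fin 11 → ℤ) → (Fin 11 → ℤ) :=
  fun c => ∑ j, c j • tauImage j

open Matrix

theorem Matrix.vecMul_bijective_of_mul_eq_one {n R : Type*} [CommRing R] [Fintype n]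
    [DecidableEq n] {M N : Matrix n n R} (h : M * N = 1) :
    Function.Bijective (fun v : n → R => v ᵥ* M) := by
  refine Function.bijective_iff_has_inverse.2 ⟨(· ᵥ* N), fun v => ?_, fun v => ?_⟩
  · simp only [vecMul_vecMul, h, vecMul_one]
  · simp only [vecMul_vecMul, mul_eq_one_comm.1 h, vecMul_one]

/-- Row `i` is the preimage under `τ̂⋆` of the `i`-th codomain basis vector, e.g.
`τ̂⋆(h - e₁₂₃) = h̃₁₂` and `τ̂⋆(2h - e₁₂₃ - e₁₂₄ - e₁₃₄) = ẽ₂₄₆`. -/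
def tauInvImage : Fin 11 → Fin 11 → ℤ :=
  ![![1, -1, 0, 0, 0, 0, 0, 0, 0, 0, 0],
    ![1, 0, -1, 0, 0, 0, 0, 0, 0, 0, 0],
    ![1, 0, 0, -1, 0, 0, 0, 0, 0, 0, 0],
    ![0, 0, 0, 0, 1, 0, 0, 0, 0, 0, 0],
    ![2, -1, -1, -1, 0, 0, 0, 0, 0, 0, 0],
    ![0, 0, 0, 0, 0, 0, 0, 0, 1, 0, 0],
    ![0, 0, 0, 0, 0, 0, 0, 0, 0, 1, 0],
    ![0, 0, 0, 0, 0, 0, 0, 0, 0, 0, 1],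
    ![1, 0, -1, -1, 0, 0, 0, 1, 0, 0, 0],
    ![1, -1, 0, -1, 0, 0, 1, 0, 0, 0, 0],
    ![1, -1, -1, 0, 0, 1, 0, 0, 0, 0, 0]]

theorem tauImage_mul_tauInvImage : Matrix.of tauImage * Matrix.of tauInvImage = 1 := by
  decide

theorem tauStar_eq_vecMul : tauStar = fun c => c ᵥ* Matrix.of tauImage :=
  funext fun c => (vecMul_eq_sum c _).symm

/-- The pushforward `τ̂⋆` is a bijection (a `ℤ`-module isomorphism of `ℤ¹¹`). -/
theorem tauStar_bijective : Function.Bijective tauStar := by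
  rw [tauStar_eq_vecMul]
  exact Matrix.vecMul_bijective_of_mul_eq_one tauImage_mul_tauInvImage
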